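/- arXiv:1409.0389 — 4 statements merged into one kernel-verified Lean document; each statement's English description precedes it below -/
import Mathlib

section
/- Let d ≥ 1, let θ₀ > θ₁ > ... > θ_d be real numbers, let m₀,...,m_d be positive reals, and let P₀,...,P_d be real numbers satisfying mᵢ · Pᵢ · ∏_{j≠i}(θᵢ - θⱼ) = C for all i, where C > 0 is a fixed constant. Then for g ≠ h, P_g = P_h if and only if ∑ᵢ mᵢ ∏_{j∉{g,h}}(θᵢ - θⱼ) = 0. -/
/-! Write `A i = ∏_{j ≠ i} (θ i - θ j)`. Since `m i * A i * P i = C ≠ 0`, the values `P g` and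
`P h` agree exactly when the weights `m g * A g` and `m h * A h` do. Splitting the factor
`θ g - θ h` off `A g` and `θ h - θ g` off `A h` gives
`m g * A g - m h * A h = (θ g - θ h) * ∑ i, m i * ∏_{j ∉ {g, h}} (θ i - θ j)`,
because every summand with `i ∉ {g, h}` contains the factor `θ i - θ i = 0`. -/

open Finset

section

variable {ι : Type*} [Fintype ι] [DecidableEq ι]

theorem Finset.prod_univ_erase_eq_mul_prod_sdiff_pair {M : Type*} [CommMonoid M] (f : ι → M)
    {g h : ι} (hgh : g ≠ h) :
    ∏ j ∈ univ.erase g, f j = f h * ∏ j ∈ univ \ {g, h}, f j := by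
  rw [sdiff_insert, sdiff_singleton_eq_erase, erase_right_comm,
    mul_prod_erase _ _ (mem_erase.2 ⟨hgh.symm, mem_univ h⟩)]

variable {K : Type*}

theorem sum_mul_prod_sdiff_pair [CommRing K] (m θ : ι → K) {g h : ι} (hgh : g ≠ h) :
    ∑ i, m i * ∏ j ∈ univ \ {g, h}, (θ i - θ j) =
      m g * ∏ j ∈ univ \ {g, h}, (θ g - θ j) + m h * ∏ j ∈ univ \ {g, h}, (θ h - θ j) :=
  Fintype.sum_eq_add g h hgh fun i hi => by
    rw [prod_eq_zero (i := i) (by simp [hi.1, hi.2]) (sub_self _), mul_zero]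

theorem mul_prod_erase_sub_mul_prod_erase [CommRing K] (m θ : ι → K) {g h : ι} (hgh : g ≠ h) :
    m g * ∏ j ∈ univ.erase g, (θ g - θ j) - m h * ∏ j ∈ univ.erase h, (θ h - θ j) =
      (θ g - θ h) * ∑ i, m i * ∏ j ∈ univ \ {g, h}, (θ i - θ j) := by
  rw [sum_mul_prod_sdiff_pair m θ hgh, prod_univ_erase_eq_mul_prod_sdiff_pair _ hgh,
    prod_univ_erase_eq_mul_prod_sdiff_pair _ hgh.symm, pair_comm]
  ring

theorem eq_iff_eq_of_mul_eq_of_mul_eq [Field K] {a b x y C : K} (hC : C ≠ 0)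
    (hx : a * x = C) (hy : b * y = C) : x = y ↔ a = b := by
  constructor
  · rintro rfl
    exact mul_right_cancel₀ (right_ne_zero_of_mul (hx ▸ hC)) (hx.trans hy.symm)
  · rintro rfl
    exact mul_left_cancel₀ (left_ne_zero_of_mul (hx ▸ hC)) (hx.trans hy.symm)

end

theorem stmt0_general (d : ℕ) (θ m P : Fin (d + 1) → ℝ)
    (hθ : StrictAnti θ) (C : ℝ) (hC : 0 < C)
    (hP : ∀ i, m i * P i * ∏ j ∈ univ.erase i, (θ i - θ j) = C)
    (g h : Fin (d + 1)) (hgh : g ≠ h) :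
    P g = P h ↔ ∑ i, m i * ∏ j ∈ univ \ {g, h}, (θ i - θ j) = 0 := by
  have hθgh : θ g - θ h ≠ 0 := sub_ne_zero.2 (hθ.injective.ne hgh)
  rw [eq_iff_eq_of_mul_eq_of_mul_eq hC.ne' ((mul_right_comm _ _ _).symm.trans (hP g))
      ((mul_right_comm _ _ _).symm.trans (hP h)), ← sub_eq_zero,
    mul_prod_erase_sub_mul_prod_erase m θ hgh, mul_eq_zero, or_iff_right hθgh]

theorem stmt0 (d : ℕ) (hd : 1 ≤ d) (θ m P : Fin (d + 1) → ℝ)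
    (hθ : StrictAnti θ) (hm : ∀ i, 0 < m i) (C : ℝ) (hC : 0 < C)
    (hP : ∀ i, m i * P i * ∏ j ∈ univ.erase i, (θ i - θ j) = C)
    (g h : Fin (d + 1)) (hgh : g ≠ h) :
    P g = P h ↔ ∑ i, m i * ∏ j ∈ univ \ {g, h}, (θ i - θ j) = 0 :=
  stmt0_general d θ m P hθ C hC hP g h hgh
end

section
/- Let d ≥ 1, let θ₀,...,θ_d be pairwise distinct real numbers, let m₀,...,m_d be positive reals, let C > 0, and let P₀,...,P_d be real numbers with mᵢ · Pᵢ · ∏_{j≠i}(θᵢ - θⱼ) = C for all i. Let H ⊆ {0,...,d} with |H| ≥ 2. Then all P_h for h ∈ H are equal if and only if ∑ᵢ mᵢ θᵢᵉ ∏_{j∉H}(θᵢ - θⱼ) = 0 for all 0 ≤ e ≤ |H| - 2. -/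
/-!
Put `w i = m i * ∏_{j ∉ H} (θ i - θ j)`. It vanishes off `H`, and for `i ∈ H` the hypothesis gives
`w i = C / (P i * ∏_{j ∈ H, j ≠ i} (θ i - θ j))`, so the conditions read
`∑_{i ∈ H} θ i ^ e / (P i * ∏_{j ∈ H, j ≠ i} (θ i - θ j)) = 0` for `e ≤ |H| - 2`.
When `P` is constant on `H` this sum is, up to a factor, the coefficient of `X ^ (|H| - 1)` in the
Lagrange interpolant of `X ^ e` on the nodes `θ|_H`, which is zero. Conversely, by linearity the
conditions hold for every polynomial of degree `≤ |H| - 2` in place of `X ^ e`; the nodal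
polynomial of `H \ {g, h}` leaves only `(1 / P g - 1 / P h) / (θ g - θ h) = 0`.
-/

open Finset Polynomial Lagrange

theorem prod_erase_eq_prod_erase_mul_prod_sdiff {ι M : Type*} [DecidableEq ι] [CommMonoid M]
    {s t : Finset ι} (f : ι → M) (hst : s ⊆ t) {i : ι} (hi : i ∈ s) :
    ∏ j ∈ t.erase i, f j = (∏ j ∈ s.erase i, f j) * ∏ j ∈ t \ s, f j := by
  have hsdiff : t.erase i \ s.erase i = t \ s := by
    rw [← erase_sdiff_distrib, erase_eq_of_notMem fun h => (mem_sdiff.mp h).2 hi]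
  rw [← prod_sdiff (erase_subset_erase i hst), hsdiff, mul_comm]

theorem sum_mul_eval_eq_zero_of_sum_mul_pow_eq_zero {R ι : Type*} [CommSemiring R]
    (s : Finset ι) (a v : ι → R) {N : ℕ}
    (hmom : ∀ e ≤ N, ∑ i ∈ s, a i * v i ^ e = 0) {p : R[X]} (hp : p.natDegree ≤ N) :
    ∑ i ∈ s, a i * p.eval (v i) = 0 := by
  calc ∑ i ∈ s, a i * p.eval (v i)
      = ∑ e ∈ range (N + 1), p.coeff e * ∑ i ∈ s, a i * v i ^ e := by
        simp_rw [eval_eq_sum_range' (Nat.lt_succ_of_le hp), mul_sum]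
        rw [sum_comm]
        exact sum_congr rfl fun i _ => sum_congr rfl fun e _ => by ring
    _ = 0 := sum_eq_zero fun e he => by
        rw [hmom e (Nat.lt_succ_iff.mp (mem_range.mp he)), mul_zero]

theorem sum_pow_div_prod_sub_eq_zero {F ι : Type*} [Field F] [DecidableEq ι] {s : Finset ι}
    {v : ι → F} (hv : Set.InjOn v s) {e : ℕ} (he : e + 2 ≤ #s) :
    ∑ i ∈ s, v i ^ e / ∏ j ∈ s.erase i, (v i - v j) = 0 := by
  have hcoeff := coeff_eq_sum hv (P := X ^ e) (by
    rw [degree_X_pow]; exact_mod_cast (by omega : e < #s))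
  simpa only [coeff_X_pow, if_neg (by omega : #s - 1 ≠ e), eval_pow, eval_X] using hcoeff.symm

theorem eq_of_forall_sum_div_prod_sub_mul_pow_eq_zero {F ι : Type*} [Field F] [DecidableEq ι]
    {s : Finset ι} {v : ι → F} (hv : Set.InjOn v s) {c : ι → F}
    (hmom : ∀ e ≤ #s - 2, ∑ i ∈ s, c i / (∏ j ∈ s.erase i, (v i - v j)) * v i ^ e = 0)
    {g h : ι} (hg : g ∈ s) (hh : h ∈ s) (hgh : g ≠ h) : c g = c h := by
  have hh_erase : h ∈ s.erase g := mem_erase.mpr ⟨hgh.symm, hh⟩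
  have hg_erase : g ∈ s.erase h := mem_erase.mpr ⟨hgh, hg⟩
  set T := (s.erase g).erase h with hT
  have hTcard : #T = #s - 2 := by
    rw [card_erase_of_mem hh_erase, card_erase_of_mem hg]; omega
  have hzero := sum_mul_eval_eq_zero_of_sum_mul_pow_eq_zero s _ v hmom
    (p := nodal T v) (by rw [natDegree_nodal, hTcard])
  rw [sum_eq_add_of_mem g h hg hh hgh fun i hi hne => by
    rw [eval_nodal_at_node (mem_erase.mpr ⟨hne.2, mem_erase.mpr ⟨hne.1, hi⟩⟩),
      mul_zero]] at hzero
  have hprod_g : ∏ j ∈ s.erase g, (v g - v j) = (v g - v h) * (nodal T v).eval (v g) := by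
    rw [eval_nodal]; exact (mul_prod_erase _ (fun j => v g - v j) hh_erase).symm
  have hprod_h : ∏ j ∈ s.erase h, (v h - v j) = (v h - v g) * (nodal T v).eval (v h) := by
    rw [eval_nodal, hT, erase_right_comm]
    exact (mul_prod_erase _ (fun j => v h - v j) hg_erase).symm
  have hnodal_ne_zero : ∀ k ∈ s, k ∉ T → (nodal T v).eval (v k) ≠ 0 := fun k hk hkT =>
    eval_nodal_not_at_node fun j hj hkj =>
      hkT (hv hk (mem_of_mem_erase (mem_of_mem_erase hj)) hkj ▸ hj)
  have hvgh : v g - v h ≠ 0 := sub_ne_zero.mpr fun h' => hgh (hv hg hh h')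
  have hnodal_g := hnodal_ne_zero g hg (fun hgT => (mem_erase.mp (mem_of_mem_erase hgT)).1 rfl)
  have hnodal_h := hnodal_ne_zero h hh (notMem_erase h _)
  rw [hprod_g, hprod_h, ← neg_sub (v g)] at hzero
  field_simp at hzero
  linear_combination hzero

theorem forall_eq_iff_forall_sum_div_prod_sub_mul_pow_eq_zero {F ι : Type*} [Field F]
    [DecidableEq ι] {s : Finset ι} {v : ι → F} (hv : Set.InjOn v s) (hs : 2 ≤ #s) (c : ι → F) :
    (∀ g ∈ s, ∀ h ∈ s, c g = c h) ↔
      ∀ e ≤ #s - 2, ∑ i ∈ s, c i / (∏ j ∈ s.erase i, (v i - v j)) * v i ^ e = 0 := by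
  refine ⟨fun hc e he => ?_, fun hmom g hg h hh => ?_⟩
  · obtain ⟨g, hg⟩ := card_pos.mp (by omega : 0 < #s)
    calc ∑ i ∈ s, c i / (∏ j ∈ s.erase i, (v i - v j)) * v i ^ e
        = c g * ∑ i ∈ s, v i ^ e / ∏ j ∈ s.erase i, (v i - v j) := by
          rw [mul_sum]
          refine sum_congr rfl fun i hi => ?_
          rw [hc i hi g hg]
          ring
      _ = 0 := by rw [sum_pow_div_prod_sub_eq_zero hv (by omega), mul_zero]
  · obtain rfl | hgh := eq_or_ne g h
    · rfl
    exact eq_of_forall_sum_div_prod_sub_mul_pow_eq_zero hv hmom hg hh hgh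

theorem mul_prod_sdiff_eq_mul_inv_div_prod_erase {F ι : Type*} [Field F] [Fintype ι]
    [DecidableEq ι] {θ : ι → F} (hθ : Function.Injective θ) {m P : ι → F} {C : F} (hC : C ≠ 0)
    {i : ι} (hP : m i * P i * ∏ j ∈ univ.erase i, (θ i - θ j) = C) {H : Finset ι} (hi : i ∈ H) :
    m i * ∏ j ∈ univ \ H, (θ i - θ j) = C * ((P i)⁻¹ / ∏ j ∈ H.erase i, (θ i - θ j)) := by
  rw [prod_erase_eq_prod_erase_mul_prod_sdiff _ (subset_univ H) hi] at hP
  have hP0 : P i ≠ 0 := by rintro h0; rw [h0, mul_zero, zero_mul] at hP; exact hC hP.symm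
  have hprod : ∏ j ∈ H.erase i, (θ i - θ j) ≠ 0 :=
    prod_ne_zero_iff.mpr fun j hj => sub_ne_zero.mpr (hθ.ne (mem_erase.mp hj).1.symm)
  field_simp
  linear_combination hP

theorem stmt1_general (d : ℕ) (θ m P : Fin (d + 1) → ℝ)
    (hθ : Function.Injective θ) (C : ℝ) (hC : 0 < C)
    (hP : ∀ i, m i * P i * ∏ j ∈ univ.erase i, (θ i - θ j) = C)
    (H : Finset (Fin (d + 1))) (hH : 2 ≤ H.card) :
    (∀ g ∈ H, ∀ h ∈ H, P g = P h) ↔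
      ∀ e : ℕ, e ≤ H.card - 2 →
        ∑ i, m i * θ i ^ e * ∏ j ∈ univ \ H, (θ i - θ j) = 0 := by
  have hsum : ∀ e : ℕ, ∑ i, m i * θ i ^ e * ∏ j ∈ univ \ H, (θ i - θ j)
      = C * ∑ i ∈ H, (P i)⁻¹ / (∏ j ∈ H.erase i, (θ i - θ j)) * θ i ^ e := by
    intro e
    rw [← sum_subset (subset_univ H) fun i _ hi => by
      rw [prod_eq_zero (mem_sdiff.mpr ⟨mem_univ i, hi⟩) (sub_self _), mul_zero], mul_sum]
    refine sum_congr rfl fun i hi => ?_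
    rw [mul_right_comm, mul_prod_sdiff_eq_mul_inv_div_prod_erase hθ hC.ne' (hP i) hi]
    ring
  have hcrit := forall_eq_iff_forall_sum_div_prod_sub_mul_pow_eq_zero hθ.injOn hH fun i => (P i)⁻¹
  simp only [inv_inj] at hcrit
  simp only [hcrit, hsum, mul_eq_zero, hC.ne', false_or]

theorem stmt1 (d : ℕ) (hd : 1 ≤ d) (θ m P : Fin (d + 1) → ℝ)
    (hθ : Function.Injective θ) (hm : ∀ i, 0 < m i) (C : ℝ) (hC : 0 < C)
    (hP : ∀ i, m i * P i * ∏ j ∈ univ.erase i, (θ i - θ j) = C)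
    (H : Finset (Fin (d + 1))) (hH : 2 ≤ H.card) :
    (∀ g ∈ H, ∀ h ∈ H, P g = P h) ↔
      ∀ e : ℕ, e ≤ H.card - 2 →
        ∑ i, m i * θ i ^ e * ∏ j ∈ univ \ H, (θ i - θ j) = 0 :=
  stmt1_general d θ m P hθ C hC hP H hH
end

section
/- Let θ₀ > θ₁ > θ₂ > θ₃ > θ₄ be reals, m₀,...,m₄ positive reals, and n, k, λ, b₁ reals with n > 0, k > 0, θ₀ = k, b₁ = k - 1 - λ, satisfying ∑ᵢ mᵢ = n, ∑ᵢ mᵢθᵢ = 0, ∑ᵢ mᵢθᵢ² = nk, ∑ᵢ mᵢθᵢ³ = nkλ. Then ∑ᵢ mᵢ(θᵢ - θ₀)(θᵢ - θ₂)(θᵢ - θ₄) = 0 if and only if (θ₂ + 1)(θ₄ + 1) = -b₁. -/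
open Finset

theorem stmt3 (θ m : Fin 5 → ℝ) (hθ : StrictAnti θ) (hm : ∀ i, 0 < m i)
    (n k lam b₁ : ℝ) (hn : 0 < n) (hk : 0 < k) (hθ0 : θ 0 = k)
    (hb₁ : b₁ = k - 1 - lam)
    (h0 : ∑ i, m i = n) (h1 : ∑ i, m i * θ i = 0)
    (h2 : ∑ i, m i * θ i ^ 2 = n * k) (h3 : ∑ i, m i * θ i ^ 3 = n * k * lam) :
    ∑ i, m i * (θ i - θ 0) * (θ i - θ 2) * (θ i - θ 4) = 0 ↔
      (θ 2 + 1) * (θ 4 + 1) = -b₁ := by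
  have key : ∑ i, m i * (θ i - θ 0) * (θ i - θ 2) * (θ i - θ 4) =
      -(n * k) * ((θ 2 + 1) * (θ 4 + 1) + b₁) := by
    simp only [Fin.sum_univ_five] at h0 h1 h2 h3 ⊢
    subst hb₁ hθ0
    linear_combination h3 - (θ 0 + θ 2 + θ 4) * h2 +
      (θ 0 * θ 2 + θ 0 * θ 4 + θ 2 * θ 4) * h1 - θ 0 * θ 2 * θ 4 * h0
  rw [key]
  have hnk : (0:ℝ) < n * k := mul_pos hn hk
  constructor
  · intro h
    have : (θ 2 + 1) * (θ 4 + 1) + b₁ = 0 := by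
      rcases mul_eq_zero.mp h with h' | h'
      · linarith
      · exact h'
    linarith
  · intro h
    rw [h]; ring
end

section
/- Let Γ be a distance-regular graph of diameter d whose distance 1-or-2 graph is distance-regular, i.e., b_{i-1} + bᵢ + cᵢ + c_{i+1} = 2k + μ - λ for 1 ≤ i ≤ d-1, where k = b₀, λ = a₁, μ = c₂. If d is even, then b_{d-1} + c_d = b₁ + μ. -/
theorem stmt14 (d : ℕ) (hd2 : 2 ≤ d) (hdeven : Even d) (b c : ℕ → ℝ)
    (cond : ∀ i, 1 ≤ i → i ≤ d - 1 →
      b (i - 1) + b i + c i + c (i + 1) =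
        2 * b 0 + c 2 - (b 0 - b 1 - c 1)) :
    b (d - 1) + c d = b 1 + c 2 := by
  have key : ∀ m, 2 * m + 2 ≤ d → b (2 * m + 1) + c (2 * m + 2) = b 1 + c 2 := by
    intro m
    induction m with
    | zero => intro _; norm_num
    | succ n ih =>
      intro h
      have h1 := cond (2 * n + 2) (by omega) (by omega)
      have h2 := cond (2 * n + 3) (by omega) (by omega)
      have hn := ih (by omega)
      have e1 : 2 * n + 2 - 1 = 2 * n + 1 := by omega
      have e2 : 2 * n + 3 - 1 = 2 * n + 2 := by omega
      rw [e1] at h1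
      rw [e2] at h2
      have : b (2 * n + 3) + c (2 * n + 3 + 1) = b (2 * n + 1) + c (2 * n + 2) := by
        linarith
      have e3 : 2 * (n + 1) + 1 = 2 * n + 3 := by ring
      have e4 : 2 * (n + 1) + 2 = 2 * n + 3 + 1 := by ring
      rw [e3, e4, this, hn]
  obtain ⟨m, hm⟩ := hdeven
  have hm' : d = 2 * (m - 1) + 2 := by omega
  have := key (m - 1) (by omega)
  have e : d - 1 = 2 * (m - 1) + 1 := by omega
  rw [e, hm']
  exact this
end
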